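/- Let π* be a 3-wise median of an election with voting profile V over a finite set C of alternatives, and let x, y be two alternatives occupying consecutive positions in π*. If δ_{xy} > 0 (i.e., x > y is the major order) and Q_{x,y,z} ≥ 0 for every alternative z ∈ C ∖ {x,y}, then x is ranked before y in π*. -/

import Mathlib

open Finset

variable {α : Type}

/-- A ranking of the alternatives: a duplicate-free list containing every
alternative; earlier in the list means more preferred. -/
def IsRanking (l : List α) : Prop := l.Nodup ∧ ∀ a : α, a ∈ l

/-- The 3-wise Kendall tau distance between two rankings: the number of subsets
`S` with `|S| ≤ 3` on which the two rankings have different top elements. -/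
def d3 [Fintype α] [DecidableEq α] (l m : List α) : ℕ :=
  ((Finset.univ : Finset α).powerset.filter
    (fun S => S.card ≤ 3 ∧ ∃ a ∈ S, ∃ b ∈ S, a ≠ b ∧
      (∀ c ∈ S, l.idxOf a ≤ l.idxOf c) ∧ (∀ c ∈ S, m.idxOf b ≤ m.idxOf c))).card

/-- Total 3-wise Kendall tau distance from a ranking to a voting profile. -/
def d3V [Fintype α] [DecidableEq α] (l : List α) (V : Multiset (List α)) : ℕ :=
  (V.map (fun v => d3 l v)).sum

/-- A 3-wise median of the voting profile `V`. -/
def IsMedian3 [Fintype α] [DecidableEq α] (V : Multiset (List α)) (l : List α) : Prop :=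
  IsRanking l ∧ ∀ m : List α, IsRanking m → d3V l V ≤ d3V m V

/-- The 2-wise Kendall tau distance between two rankings: the number of
two-element subsets on which the relative orders differ. -/
def d2 [Fintype α] [DecidableEq α] (l m : List α) : ℕ :=
  ((Finset.univ : Finset α).powerset.filter
    (fun S => S.card = 2 ∧ ∃ a ∈ S, ∃ b ∈ S,
      l.idxOf a < l.idxOf b ∧ m.idxOf b < m.idxOf a)).card

/-- Total 2-wise Kendall tau distance from a ranking to a voting profile. -/
def d2V [Fintype α] [DecidableEq α] (l : List α) (V : Multiset (List α)) : ℕ :=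
  (V.map (fun v => d2 l v)).sum

/-- A 2-wise median of the voting profile `V`. -/
def IsMedian2 [Fintype α] [DecidableEq α] (V : Multiset (List α)) (l : List α) : Prop :=
  IsRanking l ∧ ∀ m : List α, IsRanking m → d2V l V ≤ d2V m V

/-- `x ≥ₛ y`: `x` is ranked before `y` in at least `s·|V|` votes. -/
def geq [DecidableEq α] (V : Multiset (List α)) (s : ℝ) (x y : α) : Prop :=
  s * (V.card : ℝ) ≤ (V.countP (fun v => v.idxOf x < v.idxOf y) : ℝ)

/-- `x` is a non-dirty alternative with respect to the threshold `s`. -/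
def NonDirty [DecidableEq α] (V : Multiset (List α)) (s : ℝ) (x : α) : Prop :=
  ∀ y : α, y ≠ x → geq V s x y ∨ geq V s y x

/-- The election satisfies the `3/4`-majority rule with respect to the 3-wise
Kemeny voting scheme. -/
def Satisfies34 [Fintype α] [DecidableEq α] (V : Multiset (List α)) : Prop :=
  ∀ x : α, NonDirty V (3/4) x → ∀ y : α, y ≠ x →
    (geq V (3/4) x y → ∀ π : List α, IsMedian3 V π → π.idxOf x < π.idxOf y) ∧
    (geq V (3/4) y x → ∀ π : List α, IsMedian3 V π → π.idxOf y < π.idxOf x)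

/-- `n_{xy}`: the number of votes ranking `x` before `y`. -/
def nn2 [DecidableEq α] (V : Multiset (List α)) (x y : α) : ℕ :=
  V.countP (fun v => v.idxOf x < v.idxOf y)

/-- `n_{xyz}`: the number of votes ranking `x` before `y` before `z`. -/
def nn3 [DecidableEq α] (V : Multiset (List α)) (x y z : α) : ℕ :=
  V.countP (fun v => v.idxOf x < v.idxOf y ∧ v.idxOf y < v.idxOf z)

/-- `n_{xyzt}`: the number of votes ranking `x` before `y` before `z` before `t`. -/
def nn4 [DecidableEq α] (V : Multiset (List α)) (x y z t : α) : ℕ :=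
  V.countP (fun v => v.idxOf x < v.idxOf y ∧ v.idxOf y < v.idxOf z ∧
    v.idxOf z < v.idxOf t)

/-- `δ_{xy} = n_{xy} - n_{yx}`. -/
def del [DecidableEq α] (V : Multiset (List α)) (x y : α) : ℤ :=
  (nn2 V x y : ℤ) - nn2 V y x

/-- `P_{x,y,z}`. -/
def Pq [DecidableEq α] (V : Multiset (List α)) (x y z : α) : ℤ :=
  3 * (nn3 V x z y : ℤ) + nn3 V x y z + nn3 V z x y + nn3 V z y x
    - 4 * nn3 V y z x - 2 * nn3 V y x z

/-- `Q_{x,y,z}`. -/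
def Qq [DecidableEq α] (V : Multiset (List α)) (x y z : α) : ℤ :=
  (nn3 V x y z : ℤ) + nn3 V x z y - nn3 V y x z - nn3 V y z x

/-- `R_{y,x,z,t}`. -/
def Rr [DecidableEq α] (V : Multiset (List α)) (y x z t : α) : ℤ :=
  2 * (nn4 V y z t x : ℤ) + 2 * nn4 V y z x t + nn4 V y t z x + nn4 V y t x z

/-- `S_{y,x,z,t} = R_{y,x,z,t} - R_{x,y,z,t}`. -/
def Ss [DecidableEq α] (V : Multiset (List α)) (y x z t : α) : ℤ :=
  Rr V y x z t - Rr V x y z t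

/-!
Suppose `y` immediately precedes `x` in the median `π`, and let `π'` be `π` with `x` and `y`
swapped. Since the swap is adjacent, every set `S` not containing both `x` and `y` has the same
top element in `π` and `π'`; if `S` contains both, its top in `π'` is the image under the swap of
its top in `π`, so only sets whose `π`-top is `y` can change. These are the pair `{x, y}`, where
the swap changes the total disagreement by `n_{yx} - n_{xy} = -δ_{xy} < 0`, and the triples
`{x, y, z}` with `z` after `x`, where it changes by `-Q_{x,y,z} ≤ 0`. Hence `π'` is strictly
closer to `V` than `π`, a contradiction.
-/

section Rankings

variable [DecidableEq α] {l : List α} {x y a c : α}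

lemma IsRanking.idxOf_injective (hl : IsRanking l) : Function.Injective l.idxOf :=
  fun a _ h => (List.idxOf_inj (hl.2 a)).1 h

omit [DecidableEq α] in
lemma IsRanking.map_equiv (hl : IsRanking l) (e : α ≃ α) : IsRanking (l.map e) :=
  ⟨hl.1.map e.injective, fun a => List.mem_map.2 ⟨e.symm a, hl.2 _, e.apply_symm_apply a⟩⟩

lemma idxOf_map_equiv (l : List α) (e : α ≃ α) (a : α) :
    (l.map e).idxOf a = l.idxOf (e.symm a) := by
  induction l with
  | nil => simp
  | cons b l ih =>
    by_cases h : e b = a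
    · simp [← h]
    · simp [ih, h, Equiv.eq_symm_apply]

lemma swap_le_swap_iff_of_adjacent {f : α → ℕ} (hf : Function.Injective f)
    (hxy : f x = f y + 1) (h : ¬(a = x ∧ c = y)) (h' : ¬(a = y ∧ c = x)) :
    f (Equiv.swap x y a) ≤ f (Equiv.swap x y c) ↔ f a ≤ f c := by
  rw [Equiv.swap_apply_def, Equiv.swap_apply_def]
  split_ifs <;> grind

end Rankings

section Tops

variable [DecidableEq α] {l v : List α} {S : Finset α} {x y a b c t : α}

def RanksFirst (l : List α) (S : Finset α) (t : α) : Prop :=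
  t ∈ S ∧ ∀ c ∈ S, l.idxOf t ≤ l.idxOf c

instance (l : List α) (S : Finset α) (t : α) : Decidable (RanksFirst l S t) :=
  inferInstanceAs (Decidable (_ ∧ _))

lemma exists_ranksFirst (l : List α) (hS : S.Nonempty) : ∃ t, RanksFirst l S t :=
  let ⟨t, ht, hmin⟩ := S.exists_min_image l.idxOf hS
  ⟨t, ht, hmin⟩

lemma RanksFirst.eq (hl : IsRanking l) (ha : RanksFirst l S a) (hb : RanksFirst l S b) : a = b :=
  hl.idxOf_injective (le_antisymm (ha.2 b hb.1) (hb.2 a ha.1))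

lemma RanksFirst.map_swap_of_mem (hx : x ∈ S) (hy : y ∈ S) (ht : RanksFirst l S t) :
    RanksFirst (l.map (Equiv.swap x y)) S (Equiv.swap x y t) := by
  have hswap : ∀ c ∈ S, Equiv.swap x y c ∈ S := fun c hc => by
    rw [Equiv.swap_apply_def]; split_ifs <;> assumption
  refine ⟨hswap t ht.1, fun c hc => ?_⟩
  rw [idxOf_map_equiv, idxOf_map_equiv, Equiv.symm_swap, Equiv.swap_apply_self]
  exact ht.2 _ (hswap c hc)

lemma RanksFirst.map_swap_of_adjacent (hl : IsRanking l) (hk : l.idxOf x = l.idxOf y + 1)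
    (hS : ¬(x ∈ S ∧ y ∈ S)) (ht : RanksFirst l S t) :
    RanksFirst (l.map (Equiv.swap x y)) S t := by
  refine ⟨ht.1, fun c hc => ?_⟩
  rw [idxOf_map_equiv, idxOf_map_equiv, Equiv.symm_swap,
    swap_le_swap_iff_of_adjacent hl.idxOf_injective hk]
  · exact ht.2 c hc
  · rintro ⟨rfl, rfl⟩; exact hS ⟨ht.1, hc⟩
  · rintro ⟨rfl, rfl⟩; exact hS ⟨hc, ht.1⟩

lemma ranksFirst_pair_iff (hv : IsRanking v) (hab : a ≠ b) :
    RanksFirst v {a, b} a ↔ v.idxOf a < v.idxOf b := by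
  have := hv.idxOf_injective.ne hab
  simp only [RanksFirst, mem_insert, mem_singleton, true_or, forall_eq_or_imp, forall_eq,
    le_refl, true_and]
  omega

lemma ranksFirst_triple_iff (hv : IsRanking v) (hab : a ≠ b) (hac : a ≠ c) :
    RanksFirst v {a, b, c} a ↔ v.idxOf a < v.idxOf b ∧ v.idxOf a < v.idxOf c := by
  have := hv.idxOf_injective.ne hab
  have := hv.idxOf_injective.ne hac
  simp only [RanksFirst, mem_insert, mem_singleton, true_or, forall_eq_or_imp, forall_eq,
    le_refl, true_and]
  omega

end Tops

section Disagreement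

variable [DecidableEq α] {l v : List α} {V : Multiset (List α)} {S : Finset α} {a b c t : α}

def Disagree3 (l v : List α) (S : Finset α) : Prop :=
  S.card ≤ 3 ∧ ∃ a ∈ S, ∃ b ∈ S, a ≠ b ∧
    (∀ c ∈ S, l.idxOf a ≤ l.idxOf c) ∧ (∀ c ∈ S, v.idxOf b ≤ v.idxOf c)

instance (l v : List α) (S : Finset α) : Decidable (Disagree3 l v S) :=
  inferInstanceAs (Decidable (_ ∧ _))

lemma d3_eq_sum [Fintype α] (l v : List α) :
    d3 l v = ∑ S ∈ (univ : Finset α).powerset, if Disagree3 l v S then 1 else 0 := by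
  rw [d3, card_filter]
  exact sum_congr rfl fun S _ => if_congr (Iff.rfl : _ ↔ Disagree3 l v S) rfl rfl

lemma d3V_eq_sum_countP [Fintype α] (l : List α) (V : Multiset (List α)) :
    d3V l V = ∑ S ∈ (univ : Finset α).powerset, V.countP (Disagree3 l · S) := by
  simp only [d3V, d3_eq_sum, Multiset.sum_map_sum]
  refine sum_congr rfl fun S _ => ?_
  induction V using Multiset.induction_on with
  | empty => simp
  | cons v V ih => simp [Multiset.countP_cons, ih, add_comm]

lemma disagree3_iff (hl : IsRanking l) (hv : IsRanking v) (ht : RanksFirst l S t) :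
    Disagree3 l v S ↔ S.card ≤ 3 ∧ ¬RanksFirst v S t := by
  refine and_congr_right fun _ => ⟨?_, fun h => ?_⟩
  · rintro ⟨a, ha, b, hb, hab, hla, hvb⟩ htv
    exact hab ((RanksFirst.eq hl ⟨ha, hla⟩ ht).trans (RanksFirst.eq hv htv ⟨hb, hvb⟩))
  · obtain ⟨b, hb⟩ := exists_ranksFirst v ⟨t, ht.1⟩
    exact ⟨t, ht.1, b, hb.1, fun htb => h (htb ▸ hb), ht.2, hb.2⟩

lemma countP_disagree3 (hV : ∀ v ∈ V, IsRanking v) (hl : IsRanking l)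
    (ht : RanksFirst l S t) (hS : S.card ≤ 3) :
    (V.countP (Disagree3 l · S) : ℤ) = V.card - V.countP (RanksFirst · S t) := by
  rw [Multiset.card_eq_countP_add_countP (RanksFirst · S t) V,
    Multiset.countP_congr rfl fun v hv =>
      propext ((disagree3_iff hl (hV v hv) ht).trans (and_iff_right hS))]
  push_cast
  ring

lemma countP_ranksFirst_pair (hV : ∀ v ∈ V, IsRanking v) (hab : a ≠ b) :
    V.countP (RanksFirst · {a, b} a) = nn2 V a b :=
  Multiset.countP_congr rfl fun v hv => propext (ranksFirst_pair_iff (hV v hv) hab)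

lemma countP_ranksFirst_triple (hV : ∀ v ∈ V, IsRanking v) (hab : a ≠ b) (hac : a ≠ c)
    (hbc : b ≠ c) : V.countP (RanksFirst · {a, b, c} a) = nn3 V a b c + nn3 V a c b := by
  rw [Multiset.countP_eq_countP_filter_add _ _ (fun v => v.idxOf b < v.idxOf c),
    Multiset.countP_filter, Multiset.countP_filter, nn3, nn3]
  congr 1 <;> refine Multiset.countP_congr rfl fun v hv => propext ?_
  · rw [ranksFirst_triple_iff (hV v hv) hab hac]
    omega
  · have := (hV v hv).idxOf_injective.ne hbc
    rw [ranksFirst_triple_iff (hV v hv) hab hac]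
    omega

end Disagreement

lemma exists_eq_triple_of_pair_subset [DecidableEq α] {S : Finset α} {x y : α} (hxy : x ≠ y)
    (hsub : {x, y} ⊆ S) (hne : S ≠ {x, y}) (hcard : S.card ≤ 3) :
    ∃ z, z ≠ x ∧ z ≠ y ∧ S = {x, y, z} := by
  obtain ⟨z, hz⟩ := sdiff_nonempty.2 fun h => hne (Subset.antisymm h hsub)
  simp only [mem_sdiff, mem_insert, mem_singleton, not_or] at hz
  obtain ⟨hzS, hzx, hzy⟩ := hz
  refine ⟨z, hzx, hzy, (eq_of_subset_of_card_le ?_ ?_).symm⟩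
  · exact insert_subset (hsub (mem_insert_self x {y})) (insert_subset_iff.2
      ⟨hsub (mem_insert_of_mem (mem_singleton_self y)), singleton_subset_iff.2 hzS⟩)
  · rw [card_eq_three.2 ⟨x, y, z, hxy, Ne.symm hzx, Ne.symm hzy, rfl⟩]
    exact hcard

section AdjacentSwap

variable [DecidableEq α] {π : List α} {V : Multiset (List α)} {x y : α}

lemma countP_disagree3_swap_pair (hV : ∀ v ∈ V, IsRanking v) (hπ : IsRanking π)
    (hk : π.idxOf x = π.idxOf y + 1) :
    (V.countP (Disagree3 (π.map (Equiv.swap x y)) · {x, y}) : ℤ)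
      - V.countP (Disagree3 π · {x, y}) = -del V x y := by
  have hxy : x ≠ y := by rintro rfl; omega
  have ht : RanksFirst π {x, y} y := by
    rw [pair_comm]
    exact (ranksFirst_pair_iff hπ hxy.symm).2 (by omega)
  have ht' := ht.map_swap_of_mem (mem_insert_self x {y}) (mem_insert_of_mem (mem_singleton_self y))
  rw [Equiv.swap_apply_right] at ht'
  have hcard : ({x, y} : Finset α).card ≤ 3 := by rw [card_pair hxy]; omega
  rw [countP_disagree3 hV (hπ.map_equiv _) ht' hcard, countP_disagree3 hV hπ ht hcard,
    countP_ranksFirst_pair hV hxy, pair_comm, countP_ranksFirst_pair hV hxy.symm, del]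
  ring

lemma countP_disagree3_swap_sub_nonpos (hV : ∀ v ∈ V, IsRanking v) (hπ : IsRanking π)
    (hk : π.idxOf x = π.idxOf y + 1) (hQ : ∀ z, z ≠ x → z ≠ y → 0 ≤ Qq V x y z)
    {S : Finset α} (hS : S ≠ {x, y}) :
    (V.countP (Disagree3 (π.map (Equiv.swap x y)) · S) : ℤ)
      - V.countP (Disagree3 π · S) ≤ 0 := by
  have hxy : x ≠ y := by rintro rfl; omega
  by_cases hcard : S.card ≤ 3
  swap
  · simp [Disagree3, hcard]
  obtain rfl | hne := S.eq_empty_or_nonempty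
  · simp [Disagree3]
  obtain ⟨t, ht⟩ := exists_ranksFirst π hne
  have hm := hπ.map_equiv (Equiv.swap x y)
  by_cases hxyS : x ∈ S ∧ y ∈ S
  swap
  · rw [countP_disagree3 hV hm (ht.map_swap_of_adjacent hπ hk hxyS) hcard,
      countP_disagree3 hV hπ ht hcard, sub_self]
  rw [countP_disagree3 hV hm (ht.map_swap_of_mem hxyS.1 hxyS.2) hcard,
    countP_disagree3 hV hπ ht hcard]
  by_cases hty : t = y
  · obtain ⟨z, hzx, hzy, rfl⟩ := exists_eq_triple_of_pair_subset hxy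
      (insert_subset hxyS.1 (singleton_subset_iff.2 hxyS.2)) hS hcard
    have hQz := hQ z hzx hzy
    rw [hty, Equiv.swap_apply_right, countP_ranksFirst_triple hV hxy (Ne.symm hzx) (Ne.symm hzy),
      insert_comm, countP_ranksFirst_triple hV (Ne.symm hxy) (Ne.symm hzy) (Ne.symm hzx)]
    rw [Qq] at hQz
    push_cast
    linarith
  · have htx : t ≠ x := by
      rintro rfl
      have := ht.2 y hxyS.2
      omega
    rw [Equiv.swap_apply_of_ne_of_ne htx hty, sub_self]

lemma d3V_map_swap_lt [Fintype α] (hV : ∀ v ∈ V, IsRanking v) (hπ : IsRanking π)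
    (hk : π.idxOf x = π.idxOf y + 1) (hmaj : 0 < del V x y)
    (hQ : ∀ z, z ≠ x → z ≠ y → 0 ≤ Qq V x y z) :
    d3V (π.map (Equiv.swap x y)) V < d3V π V := by
  have hsplit : (d3V (π.map (Equiv.swap x y)) V : ℤ) - d3V π V
      = ∑ S ∈ (univ : Finset α).powerset,
          ((V.countP (Disagree3 (π.map (Equiv.swap x y)) · S) : ℤ)
            - V.countP (Disagree3 π · S)) := by
    simp only [d3V_eq_sum_countP]
    push_cast
    rw [sum_sub_distrib]
  have hpair : ({x, y} : Finset α) ∈ (univ : Finset α).powerset :=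
    mem_powerset.2 (subset_univ _)
  rw [← add_sum_erase _ _ hpair, countP_disagree3_swap_pair hV hπ hk] at hsplit
  have hrest := sum_nonpos (s := (univ : Finset α).powerset.erase {x, y}) fun S hS =>
    countP_disagree3_swap_sub_nonpos hV hπ hk hQ (ne_of_mem_erase hS)
  omega

end AdjacentSwap

theorem stmt14_general [Fintype α] [DecidableEq α]
    (V : Multiset (List α)) (hV : ∀ v ∈ V, IsRanking v)
    (π : List α) (hπ : IsMedian3 V π)
    (x y : α)
    (hcons : π.idxOf y = π.idxOf x + 1 ∨ π.idxOf x = π.idxOf y + 1)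
    (hmaj : 0 < del V x y)
    (hQ : ∀ z : α, z ≠ x → z ≠ y → 0 ≤ Qq V x y z) :
    π.idxOf x < π.idxOf y := by
  rcases hcons with hk | hk
  · omega
  · have hlt := d3V_map_swap_lt hV hπ.1 hk hmaj hQ
    exact absurd (hπ.2 _ (hπ.1.map_equiv (Equiv.swap x y))) hlt.not_ge

theorem stmt14 [Fintype α] [DecidableEq α]
    (V : Multiset (List α)) (hV : ∀ v ∈ V, IsRanking v)
    (π : List α) (hπ : IsMedian3 V π)
    (x y : α) (hxy : x ≠ y)
    (hcons : π.idxOf y = π.idxOf x + 1 ∨ π.idxOf x = π.idxOf y + 1)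
    (hmaj : 0 < del V x y)
    (hQ : ∀ z : α, z ≠ x → z ≠ y → 0 ≤ Qq V x y z) :
    π.idxOf x < π.idxOf y :=
  stmt14_general V hV π hπ x y hcons hmaj hQ
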